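/- With x_0 as above, every element of F(N) can be written as f · x_0^{-n} for some f ∈ D and n ∈ ℤ, and the map (f, n) ↦ f x_0^{-n} is a group isomorphism from the semidirect product D ⋊_α ℤ onto F(N), where α(n)(f) = x_0^n f x_0^{-n}. -/

import Mathlib

open Set

noncomputable section

/-- `d` is an `N`-adic rational: of the form `a / N ^ k`. -/
def NAdic (N : ℕ) (d : ℝ) : Prop := ∃ a k : ℕ, d = (a : ℝ) / (N : ℝ) ^ k

/-- Membership in the generalized Thompson group `F(N)`, modeled as permutations of `ℝ`
that are the identity outside `[0,1]`: continuous, strictly increasing, fixing `0` and `1`,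
differentiable except at finitely many `N`-adic points of `[0,1]`, with derivatives
integer powers of `N`. -/
def InFN (N : ℕ) (f : Equiv.Perm ℝ) : Prop :=
  Continuous f ∧ StrictMono f ∧
  (∀ x : ℝ, x ∉ Icc (0:ℝ) 1 → f x = x) ∧
  f 0 = 0 ∧ f 1 = 1 ∧
  ∃ s : Finset ℝ, (∀ x ∈ s, x ∈ Icc (0:ℝ) 1 ∧ NAdic N x) ∧
    ∀ x ∈ Icc (0:ℝ) 1, x ∉ s → ∃ m : ℤ, HasDerivAt (⇑f) ((N : ℝ) ^ m) x

/-- Membership in `F' ⊆ F(N)`: elements that are the identity near both `0` and `1`. -/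
def InF' (N : ℕ) (f : Equiv.Perm ℝ) : Prop :=
  InFN N f ∧ ∃ ε δ : ℝ, 0 < ε ∧ ε < 1 ∧ 0 < δ ∧ δ < 1 ∧
    (∀ x ∈ Icc (0:ℝ) ε, f x = x) ∧ (∀ x ∈ Icc δ (1:ℝ), f x = x)

/-- Membership in `D ⊆ F(N)`: elements that are the identity near `1`. -/
def InD (N : ℕ) (f : Equiv.Perm ℝ) : Prop :=
  InFN N f ∧ ∃ δ : ℝ, 0 < δ ∧ δ < 1 ∧ ∀ x ∈ Icc δ (1:ℝ), f x = x

/-- The piecewise linear map `A_{d,p}`. -/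
def A (N : ℕ) (d : ℝ) (p : ℤ) (x : ℝ) : ℝ :=
  if x ≤ d then x / (N : ℝ) ^ p
  else if x ≤ 1 - d / (N : ℝ) ^ p then x - d + d / (N : ℝ) ^ p
  else (N : ℝ) ^ p * x + 1 - (N : ℝ) ^ p

/-! Every `g ∈ F(N)` is affine on each gap between consecutive breakpoints: its derivative takes
values in the discrete set `{N ^ m}`, so by Darboux's theorem it is constant there. Two things
follow. First, `g` maps `N`-adic points to `N`-adic points (induct along the breakpoints), which is
what makes `F(N)` closed under products and inverses. Second, near `1` the map `g` is
`y ↦ N ^ M (y - 1) + 1`; as `x₀` has slope `N` at `1`, the element `g x₀⁻ᴹ` is the identity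
near `1`, and the decomposition is unique because `x₀ ^ k` has slope `N ^ k ≠ 1` at `1` for `k ≠ 0`. -/

open Filter Topology

section NAdic

variable {N : ℕ}

lemma NAdic.zero : NAdic N 0 := ⟨0, 0, by simp⟩

lemma NAdic.add (hN : N ≠ 0) {x y : ℝ} (hx : NAdic N x) (hy : NAdic N y) : NAdic N (x + y) := by
  obtain ⟨a, k, rfl⟩ := hx
  obtain ⟨b, j, rfl⟩ := hy
  refine ⟨a * N ^ j + b * N ^ k, k + j, ?_⟩
  push_cast
  field_simp
  ring

lemma NAdic.sub (hN : N ≠ 0) {x y : ℝ} (hyx : y ≤ x) (hx : NAdic N x) (hy : NAdic N y) :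
    NAdic N (x - y) := by
  obtain ⟨a, k, rfl⟩ := hx
  obtain ⟨b, j, rfl⟩ := hy
  have hle : b * N ^ k ≤ a * N ^ j := by
    exact_mod_cast (div_le_div_iff₀ (by positivity) (by positivity)).1 hyx
  refine ⟨a * N ^ j - b * N ^ k, k + j, ?_⟩
  rw [Nat.cast_sub hle]
  push_cast
  field_simp
  ring

lemma NAdic.zpow_mul (hN : N ≠ 0) (m : ℤ) {x : ℝ} (hx : NAdic N x) : NAdic N ((N : ℝ) ^ m * x) := by
  obtain ⟨a, k, rfl⟩ := hx
  obtain ⟨q, rfl | rfl⟩ := m.eq_nat_or_neg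
  · exact ⟨a * N ^ q, k, by rw [zpow_natCast]; push_cast; ring⟩
  · refine ⟨a, k + q, ?_⟩
    rw [zpow_neg, zpow_natCast, pow_add]
    field_simp

lemma NAdic.add_zpow_mul_sub (hN : N ≠ 0) (m : ℤ) {u v d : ℝ} (hu : NAdic N u) (hv : NAdic N v)
    (hd : NAdic N d) (hud : u ≤ d) : NAdic N (v + (N : ℝ) ^ m * (d - u)) :=
  hv.add hN ((hd.sub hN hud hu).zpow_mul hN m)

end NAdic

section Affine

variable {b : ℝ}

lemma Set.OrdConnected.subsingleton_of_subset_range_zpow (hb : 1 < b) {s : Set ℝ}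
    (hs : s.OrdConnected) (hsub : s ⊆ range (b ^ · : ℤ → ℝ)) : s.Subsingleton := by
  have hlt : ∀ i j : ℤ, b ^ i ∈ s → b ^ j ∈ s → ¬ i < j := by
    intro i j hi hj hij
    have hbi : 0 < b ^ i := zpow_pos (zero_lt_one.trans hb) i
    have hic : b ^ i < b ^ i * ((1 + b) / 2) := lt_mul_of_one_lt_right hbi (by linarith)
    have hci : b ^ i * ((1 + b) / 2) < b ^ (i + 1) := by
      rw [zpow_add_one₀ (by positivity)]
      exact mul_lt_mul_of_pos_left (by linarith) hbi
    have hcj := hci.le.trans (zpow_le_zpow_right₀ hb.le (by omega : i + 1 ≤ j))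
    obtain ⟨k, hk⟩ := hsub (hs.out hi hj ⟨hic.le, hcj⟩)
    rw [← hk] at hic hci
    have := (zpow_lt_zpow_iff_right₀ hb).1 hic
    have := (zpow_lt_zpow_iff_right₀ hb).1 hci
    omega
  intro x hx y hy
  obtain ⟨i, rfl⟩ := hsub hx
  obtain ⟨j, rfl⟩ := hsub hy
  exact congrArg _ (le_antisymm (not_lt.1 (hlt j i hy hx)) (not_lt.1 (hlt i j hx hy)))

lemma exists_eq_add_zpow_mul_sub (hb : 1 < b) {g : ℝ → ℝ} {u v : ℝ} (huv : u < v)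
    (hc : ContinuousOn g (Icc u v)) (hd : ∀ x ∈ Ioo u v, ∃ m : ℤ, HasDerivAt g (b ^ m) x) :
    ∃ m : ℤ, ∀ x ∈ Icc u v, g x = g u + b ^ m * (x - u) := by
  choose! e he using hd
  have hconst : ((fun x => b ^ e x) '' Ioo u v).Subsingleton :=
    (ordConnected_Ioo.image_hasDerivWithinAt fun x hx => (he x hx).hasDerivWithinAt)
      |>.subsingleton_of_subset_range_zpow hb (by rintro _ ⟨x, -, rfl⟩; exact ⟨_, rfl⟩)
  obtain ⟨c, hc'⟩ := nonempty_Ioo.2 huv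
  refine ⟨e c, fun x hx => ?_⟩
  rcases hx.1.eq_or_lt with rfl | hux
  · simp
  obtain ⟨ξ, hξ, hslope⟩ := exists_hasDerivAt_eq_slope g (fun x => b ^ e x) hux
    (hc.mono (Icc_subset_Icc_right hx.2)) fun y hy => he y ⟨hy.1, hy.2.trans_le hx.2⟩
  rw [hconst (mem_image_of_mem _ ⟨hξ.1, hξ.2.trans_le hx.2⟩) (mem_image_of_mem _ hc'),
    eq_div_iff (sub_ne_zero.2 hux.ne')] at hslope
  linarith

lemma exists_breakpoint_eq_add_zpow_mul_sub (hb : 1 < b) {g : ℝ → ℝ} (hg : Continuous g)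
    {s : Finset ℝ} (hd : ∀ x ∈ Icc (0 : ℝ) 1, x ∉ s → ∃ m : ℤ, HasDerivAt g (b ^ m) x)
    {x : ℝ} (hx : x ∈ Ioc (0 : ℝ) 1) :
    ∃ u ∈ insert 0 s, u < x ∧ ∃ m : ℤ, ∀ y ∈ Icc u x, g y = g u + b ^ m * (y - u) := by
  classical
  set t := (insert 0 s).filter (· < x)
  have h0t : (0 : ℝ) ∈ t := by simp [t, hx.1]
  obtain ⟨hu, hux⟩ := Finset.mem_filter.1 (t.max'_mem ⟨0, h0t⟩)
  refine ⟨_, hu, hux, exists_eq_add_zpow_mul_sub hb hux hg.continuousOn fun y hy => hd y ?_ ?_⟩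
  · exact ⟨(t.le_max' 0 h0t).trans hy.1.le, hy.2.le.trans hx.2⟩
  · exact fun hys => (t.le_max' y (by simp [t, hys, hy.2])).not_gt hy.1

end Affine

namespace InFN

variable {N : ℕ} {f g : Equiv.Perm ℝ}

lemma mapsTo_Icc (hg : InFN N g) : MapsTo g (Icc 0 1) (Icc 0 1) := by
  simpa [hg.2.2.2.1, hg.2.2.2.2.1] using hg.2.1.monotone.mapsTo_Icc (a := 0) (b := 1)

lemma nadic_apply (hN : 1 < N) (hg : InFN N g) {d : ℝ} (hd : NAdic N d) (hdI : d ∈ Icc (0 : ℝ) 1) :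
    NAdic N (g d) := by
  obtain ⟨hc, -, -, h0, -, s, hs, hder⟩ := hg
  have hins : ∀ u ∈ insert 0 s, u ∈ Icc (0 : ℝ) 1 ∧ NAdic N u :=
    Finset.forall_mem_insert _ _ _ |>.2 ⟨⟨⟨le_rfl, zero_le_one⟩, .zero⟩, hs⟩
  -- `g` is affine with slope a power of `N` between `d` and the previous breakpoint
  have step : ∀ d ∈ Icc (0 : ℝ) 1, NAdic N d →
      (∀ u ∈ insert 0 s, u < d → NAdic N (g u)) → NAdic N (g d) := by
    intro d hdI hd ih
    rcases hdI.1.eq_or_lt with rfl | hd0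
    · rw [h0]
      exact .zero
    obtain ⟨u, hu, hud, m, hm⟩ :=
      exists_breakpoint_eq_add_zpow_mul_sub (by exact_mod_cast hN) hc hder ⟨hd0, hdI.2⟩
    rw [hm d ⟨hud.le, le_rfl⟩]
    exact NAdic.add_zpow_mul_sub (by omega) m (hins u hu).2 (ih u hu hud) hd hud.le
  have hbreak : ∀ u ∈ insert 0 s, NAdic N (g u) := fun u hu =>
    ((insert 0 s : Finset ℝ).finite_toSet.wellFoundedOn (r := (· < ·))).induction hu
      fun v hv ih => step v (hins v hv).1 (hins v hv).2 ih
  exact step d hdI hd fun u hu _ => hbreak u hu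

lemma one : InFN N 1 :=
  ⟨continuous_id, strictMono_id, fun _ _ => rfl, rfl, rfl, ∅, by simp,
    fun x _ _ => ⟨0, by simpa using hasDerivAt_id x⟩⟩

lemma inv (hN : 1 < N) (hg : InFN N g) : InFN N g⁻¹ := by
  obtain ⟨-, hm, hout, h0, h1, s, hs, hder⟩ := id hg
  have hm' : StrictMono ⇑g⁻¹ := fun x y hxy => hm.lt_iff_lt.1 (by simpa using hxy)
  have hfix : ∀ x, g x = x → g⁻¹ x = x := fun x hx => by rw [Equiv.Perm.inv_eq_iff_eq, hx]
  have hcont : Continuous ⇑g⁻¹ := hm'.monotone.continuous_of_surjective (Equiv.surjective _)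
  refine ⟨hcont, hm',
    fun x hx => hfix x (hout x hx), hfix 0 h0, hfix 1 h1, s.image g, ?_, fun y hy hys => ?_⟩
  · simp only [Finset.mem_image]
    rintro _ ⟨x, hx, rfl⟩
    exact ⟨hg.mapsTo_Icc (hs x hx).1, hg.nadic_apply hN (hs x hx).2 (hs x hx).1⟩
  have hyI : g⁻¹ y ∈ Icc (0 : ℝ) 1 := by
    simpa [hfix 0 h0, hfix 1 h1] using hm'.monotone.mapsTo_Icc hy
  obtain ⟨m, hm⟩ := hder _ hyI fun h => hys (Finset.mem_image.2 ⟨_, h, by simp⟩)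
  refine ⟨-m, ?_⟩
  rw [zpow_neg]
  exact hm.of_local_left_inverse hcont.continuousAt (by positivity)
    (Eventually.of_forall fun z => by simp)

lemma mul (hN : 1 < N) (hf : InFN N f) (hg : InFN N g) : InFN N (f * g) := by
  classical
  obtain ⟨hfc, hfm, hfo, hf0, hf1, sf, hsf, hderf⟩ := hf
  obtain ⟨hgc, hgm, hgo, hg0, hg1, sg, hsg, hderg⟩ := id hg
  have hg' := hg.inv hN
  refine ⟨hfc.comp hgc, hfm.comp hgm, fun x hx => ?_, ?_, ?_, sg ∪ sf.image ⇑(g⁻¹), ?_,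
    fun x hx hxs => ?_⟩
  · simp [hgo x hx, hfo x hx]
  · simp [hg0, hf0]
  · simp [hg1, hf1]
  · simp only [Finset.mem_union, Finset.mem_image]
    rintro _ (hx | ⟨y, hy, rfl⟩)
    · exact hsg _ hx
    · exact ⟨hg'.mapsTo_Icc (hsf y hy).1, hg'.nadic_apply hN (hsf y hy).2 (hsf y hy).1⟩
  simp only [Finset.mem_union, Finset.mem_image, not_or, not_exists, not_and] at hxs
  obtain ⟨k, hk⟩ := hderg x hx hxs.1
  obtain ⟨j, hj⟩ := hderf (g x) (hg.mapsTo_Icc hx) fun h => hxs.2 _ h (by simp)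
  refine ⟨j + k, ?_⟩
  rw [zpow_add₀ (by positivity)]
  exact hj.comp x hk

end InFN

/-- The generalized Thompson group `F(N)`. -/
def thompsonSubgroup (N : ℕ) (hN : 1 < N) : Subgroup (Equiv.Perm ℝ) where
  carrier := {g | InFN N g}
  mul_mem' := InFN.mul hN
  one_mem' := InFN.one
  inv_mem' := InFN.inv hN

def HasSlopeAtOne (g : ℝ → ℝ) (a : ℝ) : Prop :=
  ∀ᶠ y in 𝓝[<] (1 : ℝ), g y = a * (y - 1) + 1

lemma tendsto_affine_nhdsLT_one {a : ℝ} (ha : 0 < a) :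
    Tendsto (fun y => a * (y - 1) + 1) (𝓝[<] 1) (𝓝[<] 1) := by
  refine tendsto_nhdsWithin_of_tendsto_nhds_of_eventually_within _ ?_
    (eventually_nhdsWithin_of_forall fun y (hy : y < 1) => ?_)
  · have : Continuous fun y : ℝ => a * (y - 1) + 1 := by fun_prop
    simpa using this.continuousAt.tendsto.mono_left (nhdsWithin_le_nhds (a := (1 : ℝ)))
  · have := mul_neg_of_pos_of_neg ha (sub_neg.2 hy)
    simp only [mem_Iio]
    linarith

namespace HasSlopeAtOne

variable {g h : ℝ → ℝ} {a c : ℝ}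

lemma of_eqOn {θ : ℝ} (hθ : θ < 1) (hg : ∀ y ∈ Icc θ 1, g y = a * (y - 1) + 1) :
    HasSlopeAtOne g a := by
  filter_upwards [Ioo_mem_nhdsLT hθ] with y hy using hg y ⟨hy.1.le, hy.2.le⟩

lemma comp (hg : HasSlopeAtOne g a) (hh : HasSlopeAtOne h c) (hc : 0 < c) :
    HasSlopeAtOne (g ∘ h) (a * c) := by
  filter_upwards [hh, (tendsto_affine_nhdsLT_one hc).eventually hg] with y hy hgy
  rw [Function.comp_apply, hy, hgy]
  ring

lemma symm {e : Equiv.Perm ℝ} (he : HasSlopeAtOne e a) (ha : 0 < a) :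
    HasSlopeAtOne e.symm a⁻¹ := by
  filter_upwards [(tendsto_affine_nhdsLT_one (inv_pos.2 ha)).eventually he] with y hy
  rw [Equiv.symm_apply_eq, hy]
  field_simp
  ring

lemma zpow {e : Equiv.Perm ℝ} (he : HasSlopeAtOne e a) (ha : 0 < a) (n : ℤ) :
    HasSlopeAtOne ⇑(e ^ n) (a ^ n) := by
  have hpow : ∀ k : ℕ, HasSlopeAtOne ⇑(e ^ k) (a ^ k) := by
    intro k
    induction k with
    | zero => exact Eventually.of_forall fun y => by simp
    | succ k ih => simpa [pow_succ] using ih.comp he ha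
  cases n with
  | ofNat k => simpa using hpow k
  | negSucc k => simpa [zpow_negSucc] using (hpow (k + 1)).symm (by positivity)

lemma unique (hga : HasSlopeAtOne g a) (hgc : HasSlopeAtOne g c) : a = c := by
  obtain ⟨y, ⟨hya, hyc⟩, hy⟩ := ((hga.and hgc).and self_mem_nhdsWithin).exists
  have hy1 : y - 1 ≠ 0 := sub_ne_zero.2 (ne_of_lt hy)
  exact mul_right_cancel₀ hy1 (by linarith)

end HasSlopeAtOne

lemma inD_iff {N : ℕ} {f : Equiv.Perm ℝ} : InD N f ↔ InFN N f ∧ HasSlopeAtOne f 1 := by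
  refine ⟨fun ⟨hf, _, _, hδ1, hid⟩ => ⟨hf, .of_eqOn hδ1 fun y hy => by rw [hid y hy]; ring⟩,
    fun ⟨hf, hslope⟩ => ?_⟩
  obtain ⟨l, hl, hsub⟩ := mem_nhdsLT_iff_exists_Ioo_subset.1 hslope
  have hl1 : l < 1 := hl
  refine ⟨hf, max ((l + 1) / 2) (1 / 2), lt_max_of_lt_right (by norm_num),
    max_lt (by linarith) (by norm_num), fun y hy => ?_⟩
  rcases hy.2.eq_or_lt with rfl | hy1
  · exact hf.2.2.2.2.1
  · have := hsub ⟨by linarith [le_max_left ((l + 1) / 2) (1 / 2), hy.1], hy1⟩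
    simpa using this

lemma InFN.exists_hasSlopeAtOne {N : ℕ} (hN : 1 < N) {g : Equiv.Perm ℝ} (hg : InFN N g) :
    ∃ M : ℤ, HasSlopeAtOne g ((N : ℝ) ^ M) := by
  obtain ⟨hc, -, -, -, h1, s, -, hder⟩ := hg
  obtain ⟨u, -, hu, M, hM⟩ :=
    exists_breakpoint_eq_add_zpow_mul_sub (by exact_mod_cast hN) hc hder ⟨one_pos, le_rfl⟩
  have hgu := hM 1 ⟨hu.le, le_rfl⟩
  rw [h1] at hgu
  exact ⟨M, .of_eqOn hu fun y hy => by rw [hM y hy]; linear_combination -hgu⟩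

lemma eq_and_eq_of_mul_zpow_eq {b : ℝ} (hb : 1 < b) {x₀ f₁ f₂ : Equiv.Perm ℝ}
    (hx₀ : HasSlopeAtOne x₀ b) (hf₁ : HasSlopeAtOne f₁ 1) (hf₂ : HasSlopeAtOne f₂ 1) {n₁ n₂ : ℤ}
    (h : f₁ * x₀ ^ n₁ = f₂ * x₀ ^ n₂) : f₁ = f₂ ∧ n₁ = n₂ := by
  have hx : x₀ ^ (n₁ - n₂) = f₁⁻¹ * f₂ := by
    rw [zpow_sub, mul_inv_eq_iff_eq_mul, mul_assoc, ← h, inv_mul_cancel_left]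
  have hf : HasSlopeAtOne ⇑(f₁⁻¹ * f₂) (1⁻¹ * 1) := (hf₁.symm one_pos).comp hf₂ one_pos
  rw [← hx] at hf
  have hslope := (hx₀.zpow (zero_lt_one.trans hb) (n₁ - n₂)).unique hf
  have hn : n₁ = n₂ := by
    rw [inv_one, one_mul, ← zpow_zero b] at hslope
    have := (zpow_right_strictMono₀ hb).injective hslope
    omega
  subst hn
  exact ⟨mul_right_cancel h, rfl⟩

theorem stmt16_general (N : ℕ) (hN : 2 ≤ N) (x₀ : Equiv.Perm ℝ) (hx₀ : InFN N x₀)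
    (h1 : ∃ θ < (1:ℝ), ∀ x ∈ Icc θ (1:ℝ), x₀ x = N * x + 1 - N) :
    (∀ (f : Equiv.Perm ℝ) (n : ℤ), InD N f → InFN N (f * x₀ ^ (-n))) ∧
    (∀ g : Equiv.Perm ℝ, InFN N g →
      ∃! q : Equiv.Perm ℝ × ℤ, InD N q.1 ∧ g = q.1 * x₀ ^ (-q.2)) ∧
    (∀ (f f' : Equiv.Perm ℝ) (n n' : ℤ), InD N f → InD N f' →
      (f * x₀ ^ (-n)) * (f' * x₀ ^ (-n')) =
        (f * (x₀ ^ (-n) * f' * x₀ ^ n)) * x₀ ^ (-(n + n'))) := by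
  have hb : (1 : ℝ) < N := by exact_mod_cast hN
  have hN0 : (0 : ℝ) < N := zero_lt_one.trans hb
  obtain ⟨θ, hθ, hθx₀⟩ := h1
  have hx₀N : HasSlopeAtOne x₀ N := .of_eqOn hθ fun y hy => by rw [hθx₀ y hy]; ring
  have hFN : ∀ f : Equiv.Perm ℝ, ∀ n : ℤ, InFN N f → InFN N (f * x₀ ^ n) := fun f n hf =>
    (thompsonSubgroup N hN).mul_mem hf ((thompsonSubgroup N hN).zpow_mem hx₀ n)
  refine ⟨fun f n hf => hFN f (-n) hf.1, fun g hg => ?_, fun _ _ _ _ _ _ => by group⟩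
  obtain ⟨M, hM⟩ := hg.exists_hasSlopeAtOne hN
  have hD : InD N (g * x₀ ^ (-M)) := by
    refine inD_iff.2 ⟨hFN g _ hg, ?_⟩
    have hslope : HasSlopeAtOne ⇑(g * x₀ ^ (-M)) ((N : ℝ) ^ M * (N : ℝ) ^ (-M)) :=
      hM.comp (hx₀N.zpow hN0 (-M)) (by positivity)
    rwa [← zpow_add₀ (by positivity), add_neg_cancel, zpow_zero] at hslope
  refine ⟨(g * x₀ ^ (-M), -M), ⟨hD, by group⟩, ?_⟩
  rintro ⟨f, n⟩ ⟨hf, rfl⟩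
  obtain ⟨hf, hn⟩ := eq_and_eq_of_mul_zpow_eq hb hx₀N (inD_iff.1 hf).2 (inD_iff.1 hD).2
    (show f * x₀ ^ (-n) = f * x₀ ^ (-n) * x₀ ^ (-M) * x₀ ^ (-(-M)) by group)
  exact Prod.ext hf (neg_injective hn)

/-- every element of `F(N)` is uniquely `f · x₀⁻ⁿ` with `f ∈ D`, `n ∈ ℤ`, all
such products lie in `F(N)`, and the map `(f, n) ↦ f x₀⁻ⁿ` intertwines the semidirect
product multiplication (with the conjugation action) with multiplication in `F(N)`. -/
theorem stmt16 (N : ℕ) (hN : 2 ≤ N) (x₀ : Equiv.Perm ℝ) (hx₀ : InFN N x₀)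
    (h0 : ∃ η > (0:ℝ), ∀ x ∈ Icc (0:ℝ) η, x₀ x = x)
    (h1 : ∃ θ < (1:ℝ), ∀ x ∈ Icc θ (1:ℝ), x₀ x = N * x + 1 - N) :
    (∀ (f : Equiv.Perm ℝ) (n : ℤ), InD N f → InFN N (f * x₀ ^ (-n))) ∧
    (∀ g : Equiv.Perm ℝ, InFN N g →
      ∃! q : Equiv.Perm ℝ × ℤ, InD N q.1 ∧ g = q.1 * x₀ ^ (-q.2)) ∧
    (∀ (f f' : Equiv.Perm ℝ) (n n' : ℤ), InD N f → InD N f' →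
      (f * x₀ ^ (-n)) * (f' * x₀ ^ (-n')) =
        (f * (x₀ ^ (-n) * f' * x₀ ^ n)) * x₀ ^ (-(n + n'))) :=
  stmt16_general N hN x₀ hx₀ h1
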